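/- arXiv:2506.23906 — 6 statements merged into one kernel-verified Lean document; each statement's English description precedes it below -/
import Mathlib

section
/- Let x be an integer vector and f a boolean (0/1) vector, both of length n, with f(0)=1. Let z be the segmented scan of x over f. Then for every index i, z(i) equals the sum x(p) + x(p+1) + ... + x(i), where p is the largest index j ≤ i with f(j) = 1 (the start of the segment containing i). -/
/-- Segmented scan of `x` over the boolean flag vector `f`. -/
def segscan (x : ℕ → ℤ) (f : ℕ → Bool) : ℕ → ℤ
  | 0 => x 0
  | i + 1 => if f (i + 1) = true then x (i + 1) else segscan x f i + x (i + 1)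

theorem stmt_3 (x : ℕ → ℤ) (f : ℕ → Bool) (hf0 : f 0 = true)
    (i p : ℕ) (hpi : p ≤ i) (hfp : f p = true)
    (hlast : ∀ j, p < j → j ≤ i → f j = false) :
    segscan x f i = ∑ j ∈ Finset.Icc p i, x j := by
  induction i with
  | zero =>
    interval_cases p
    simp [segscan]
  | succ n ih =>
    rcases eq_or_lt_of_le hpi with h | h
    · subst h
      simp [segscan, hfp]
    · have hple : p ≤ n := Nat.lt_succ_iff.mp h
      have hfn : f (n + 1) = false := hlast _ (by omega) le_rfl
      have := ih hple (fun j hj hj' => hlast j hj (by omega))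
      rw [show n + 1 = n + 1 from rfl]
      simp [segscan, hfn, this]
      rw [Finset.sum_Icc_succ_top (by omega)]
end

section
/- (Correctness of speculation reversion.) Let x be an integer vector and f a boolean vector, both of length s, with f(0)=1. Let x̂ be the full (unsegmented) inclusive scan of x, and let f̂ be the full inclusive scan of f, so that f̂(i) is the index (1-based) of the segment containing position i. Define z(i) = x̂(i) if f̂(i) = 1, and z(i) = x̂(i) - x̂(p-1) otherwise, where p is the smallest index with f̂(p) = f̂(i) (the start of the segment containing i). Then z equals the segmented scan of x over f. -/
lemma seg_sum (x : ℕ → ℤ) (f : ℕ → Bool) :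
    ∀ i p, p ≤ i → (p = 0 ∨ f p = true) → (∀ j, p < j → j ≤ i → f j = false) →
      segscan x f i = ∑ j ∈ Finset.Icc p i, x j := by
  intro i
  induction i with
  | zero =>
    intro p hp _ _
    interval_cases p
    simp [segscan]
  | succ n ih =>
    intro p hp hfp hfalse
    rcases Nat.lt_or_ge p (n+1) with h | h
    · have hpn : p ≤ n := Nat.lt_succ_iff.mp h
      have hfn1 : f (n+1) = false :=
        hfalse _ (Nat.lt_of_le_of_lt hpn (Nat.lt_succ_self n)) le_rfl
      have hrec := ih p hpn hfp (fun j h1 h2 => hfalse j h1 (Nat.le_succ_of_le h2))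
      rw [Finset.sum_Icc_succ_top (Nat.le_succ_of_le hpn)]
      simp [segscan, hfn1, hrec]
    · have hpe : p = n + 1 := le_antisymm hp h
      subst hpe
      rcases hfp with h0 | ht
      · omega
      · simp [segscan, ht]

/-- Correctness of speculation reversion: the segmented scan can be recovered from
the full scans `x̂` and `f̂`, subtracting the scan value at the end of the previous
segment (position `p - 1`, where `p` is the first index of the current segment). -/
theorem stmt_4 (x : ℕ → ℤ) (f : ℕ → Bool) (hf0 : f 0 = true)
    (xhat fhat : ℕ → ℤ)
    (hxhat : ∀ i, xhat i = ∑ j ∈ Finset.range (i + 1), x j)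
    (hfhat : ∀ i, fhat i = ∑ j ∈ Finset.range (i + 1), (if f j = true then (1 : ℤ) else 0))
    (i p : ℕ) (hp : fhat p = fhat i) (hpmin : ∀ q, q < p → fhat q ≠ fhat i) :
    segscan x f i = if fhat i = 1 then xhat i else xhat i - xhat (p - 1) := by
  have hfhat0 : fhat 0 = 1 := by rw [hfhat, Finset.sum_range_one, if_pos hf0]
  have hsucc : ∀ j, fhat (j + 1) = fhat j + (if f (j+1) = true then 1 else 0) := by
    intro j; rw [hfhat, hfhat, Finset.sum_range_succ]
  have hmono : ∀ a b : ℕ, a ≤ b → fhat a ≤ fhat b := by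
    intro a b hab
    rw [hfhat, hfhat]
    apply Finset.sum_le_sum_of_subset_of_nonneg
    · exact Finset.range_subset_range.mpr (by omega)
    · intro j _ _; positivity
  have hpi : p ≤ i := by
    by_contra h
    exact hpmin i (by omega) rfl
  have hsq : ∀ j, p ≤ j → j ≤ i → fhat j = fhat i := by
    intro j h1 h2
    have := hmono p j h1
    have := hmono j i h2
    omega
  have hfalse : ∀ j, p < j → j ≤ i → f j = false := by
    intro j h1 h2
    obtain ⟨k, rfl⟩ : ∃ k, j = k + 1 := ⟨j - 1, by omega⟩
    have e1 : fhat (k+1) = fhat i := hsq _ (by omega) h2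
    have e2 : fhat k = fhat i := hsq _ (by omega) (by omega)
    have := hsucc k
    by_contra hc
    simp at hc
    simp [hc] at this
    omega
  have hft : p = 0 ∨ f p = true := by
    rcases Nat.eq_zero_or_pos p with h0 | h0
    · exact Or.inl h0
    · right
      obtain ⟨k, rfl⟩ : ∃ k, p = k + 1 := ⟨p - 1, by omega⟩
      have := hsucc k
      have hne : fhat k ≠ fhat i := hpmin k (by omega)
      by_contra hc
      simp at hc
      simp [hc] at this
      omega
  have hseg := seg_sum x f i p hpi hft hfalse
  rcases Nat.eq_zero_or_pos p with h0 | h0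
  · subst h0
    have h1 : fhat i = 1 := by rw [← hp, hfhat0]
    rw [if_pos h1, hseg, hxhat]
    rw [show Finset.Icc 0 i = Finset.range (i+1) by rw [Finset.range_eq_Ico, Finset.Ico_add_one_right_eq_Icc]]
  · have hne : fhat i ≠ 1 := by
      intro h1
      exact hpmin 0 h0 (by rw [hfhat0, h1])
    rw [if_neg hne, hseg, hxhat, hxhat]
    have : Finset.Icc p i = Finset.Ico p (i+1) := by
      ext j; simp
    rw [this, Finset.sum_Ico_eq_sub _ (by omega : p ≤ i + 1)]
    have : p - 1 + 1 = p := by omega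
    rw [this]
end

section
/- (Correctness of the block-recursive segmented scan.) Let x be an integer vector and f a boolean vector of length n = m·s with f(0)=1. Define: (1) y, the per-block segmented scan, i.e., for each block k the restriction of y to positions [ks, (k+1)s) is the segmented scan of x restricted to that block with flags given by f restricted to that block but with the flag at position ks forced to 1; (2) x_s(k) = y((k+1)s - 1) for 0 ≤ k < m; (3) f_s(k) = 1 iff f(j)=1 for some j in [ks, (k+1)s); (4) z_s, the segmented scan of x_s over f_s. Then the segmented scan z of x over f satisfies: z(i) = y(i) + z_s(k-1) if i lies in block k ≥ 1, no flag occurs in f at positions [ks, i], and it is not the case that i is the position ks with f(ks)=1; and z(i) = y(i) otherwise (with the convention that for i in block 0, z(i) = y(i)). -/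
lemma segscan_succ (x : ℕ → ℤ) (f : ℕ → Bool) (i : ℕ) :
    segscan x f (i + 1) = if f (i + 1) = true then x (i + 1) else segscan x f i + x (i + 1) :=
  rfl

lemma segscan_congr (x x' : ℕ → ℤ) (f f' : ℕ → Bool) (r : ℕ)
    (hx : ∀ t, t ≤ r → x t = x' t) (hf : ∀ t, t ≤ r → f t = f' t) :
    segscan x f r = segscan x' f' r := by
  induction r with
  | zero => simpa [segscan] using hx 0 le_rfl
  | succ n ih =>
    rw [segscan_succ, segscan_succ, hf (n+1) le_rfl, hx (n+1) le_rfl,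
      ih (fun t ht => hx t (by omega)) (fun t ht => hf t (by omega))]

/-- Correctness of the block-recursive segmented scan: the global segmented scan is
obtained from the per-block segmented scans `y` and the segmented scan `z_s` of the
block-last values `x_s` over the block-OR flags `f_s`. -/
theorem stmt_6 (m s : ℕ) (hs : 0 < s) (hm : 0 < m)
    (x : ℕ → ℤ) (f : ℕ → Bool) (hf0 : f 0 = true)
    (y : ℕ → ℤ)
    (hy : ∀ k r, k < m → r < s →
      y (k * s + r) =
        segscan (fun t => x (k * s + t)) (fun t => if t = 0 then true else f (k * s + t)) r)
    (xs : ℕ → ℤ) (hxs : ∀ k, k < m → xs k = y ((k + 1) * s - 1))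
    (fs : ℕ → Bool) (hfs : ∀ k, k < m → (fs k = true ↔ ∃ j, j < s ∧ f (k * s + j) = true)) :
    ∀ k r, k < m → r < s →
      segscan x f (k * s + r) =
        if 1 ≤ k ∧ (∀ j, k * s ≤ j → j ≤ k * s + r → f j = false) ∧
            ¬(r = 0 ∧ f (k * s) = true) then
          y (k * s + r) + segscan xs fs (k - 1)
        else
          y (k * s + r) := by
  suffices H : ∀ k, k < m →
      ((∀ r, r < s →
        segscan x f (k * s + r) =
          if 1 ≤ k ∧ (∀ j, k * s ≤ j → j ≤ k * s + r → f j = false) ∧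
              ¬(r = 0 ∧ f (k * s) = true) then
            y (k * s + r) + segscan xs fs (k - 1)
          else
            y (k * s + r))
      ∧ segscan x f (k * s + (s - 1)) = segscan xs fs k) by
    intro k r hk hr; exact (H k hk).1 r hr
  intro k
  induction k with
  | zero =>
    intro hk0
    have hblock : ∀ r, r < s → segscan x f (0 * s + r) = y (0 * s + r) := by
      intro r hr
      rw [hy 0 r hk0 hr]
      simp only [Nat.zero_mul, Nat.zero_add]
      apply segscan_congr
      · intro t ht; simp
      · intro t ht
        rcases t with _ | t
        · simp [hf0]
        · simp
    refine ⟨fun r hr => ?_, ?_⟩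
    · rw [if_neg (by rintro ⟨h1, -, -⟩; omega), hblock r hr]
    · have h1 : s - 1 < s := by omega
      rw [hblock (s - 1) h1, show (0 : ℕ) * s + (s - 1) = (0 + 1) * s - 1 by omega,
        ← hxs 0 hk0]
      rfl
  | succ n ih =>
    intro hk
    have hn : n < m := by omega
    obtain ⟨ihP, ihQ⟩ := ih hn
    have hmul : (n + 1) * s = n * s + s := by ring
    have hmul2 : (n + 1 + 1) * s = (n + 1) * s + s := by ring
    have hzprev : segscan x f ((n + 1) * s - 1) = segscan xs fs n := by
      rw [show (n + 1) * s - 1 = n * s + (s - 1) by omega]; exact ihQ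
    have hP : ∀ r, r < s →
        segscan x f ((n + 1) * s + r) =
          if 1 ≤ n + 1 ∧ (∀ j, (n + 1) * s ≤ j → j ≤ (n + 1) * s + r → f j = false) ∧
              ¬(r = 0 ∧ f ((n + 1) * s) = true) then
            y ((n + 1) * s + r) + segscan xs fs (n + 1 - 1)
          else
            y ((n + 1) * s + r) := by
      intro r
      induction r with
      | zero =>
        intro _
        have e1 : (n + 1) * s = ((n + 1) * s - 1) + 1 := by omega
        have hy0 : y ((n + 1) * s + 0) = x ((n + 1) * s) := by
          rw [hy (n + 1) 0 hk hs]; simp [segscan]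
        by_cases hfk : f ((n + 1) * s) = true
        · rw [if_neg (by rintro ⟨-, -, h3⟩; exact h3 ⟨rfl, hfk⟩)]
          have hz : segscan x f ((n + 1) * s + 0) = x ((n + 1) * s) := by
            rw [Nat.add_zero, e1, segscan_succ, ← e1, if_pos hfk]
          rw [hz, hy0]
        · have hfk' : f ((n + 1) * s) = false := by simpa using hfk
          rw [if_pos ⟨by omega, fun j h1 h2 => by
              have : j = (n + 1) * s := by omega
              rw [this]; exact hfk',
            by rintro ⟨-, h2⟩; exact hfk h2⟩]
          have hz : segscan x f ((n + 1) * s + 0) =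
              segscan x f ((n + 1) * s - 1) + x ((n + 1) * s) := by
            rw [Nat.add_zero, e1, segscan_succ, ← e1, if_neg hfk]
          rw [hz, hzprev, hy0, show n + 1 - 1 = n from rfl]
          ring
      | succ r ihr =>
        intro hr1
        have hr : r < s := by omega
        have hzr := ihr hr
        have estep : (n + 1) * s + (r + 1) = ((n + 1) * s + r) + 1 := by omega
        have zstep : segscan x f ((n + 1) * s + (r + 1)) =
            if f ((n + 1) * s + (r + 1)) = true then x ((n + 1) * s + (r + 1))
            else segscan x f ((n + 1) * s + r) + x ((n + 1) * s + (r + 1)) := by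
          rw [estep, segscan_succ]
        have ystep : y ((n + 1) * s + (r + 1)) =
            if f ((n + 1) * s + (r + 1)) = true then x ((n + 1) * s + (r + 1))
            else y ((n + 1) * s + r) + x ((n + 1) * s + (r + 1)) := by
          rw [hy (n + 1) (r + 1) hk hr1, segscan_succ, hy (n + 1) r hk hr]
          simp
        by_cases hfnew : f ((n + 1) * s + (r + 1)) = true
        · rw [if_neg (by
            rintro ⟨-, hall, -⟩
            have := hall ((n + 1) * s + (r + 1)) (by omega) le_rfl
            rw [hfnew] at this; exact Bool.true_eq_false.mp this)]
          rw [zstep, if_pos hfnew, ystep, if_pos hfnew]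
        · have hfnew' : f ((n + 1) * s + (r + 1)) = false := by simpa using hfnew
          by_cases hcond : (1 ≤ n + 1 ∧
              (∀ j, (n + 1) * s ≤ j → j ≤ (n + 1) * s + r → f j = false) ∧
              ¬(r = 0 ∧ f ((n + 1) * s) = true))
          · rw [if_pos ⟨by omega, fun j h1 h2 => by
                rcases Nat.lt_or_ge j ((n + 1) * s + (r + 1)) with h | h
                · exact hcond.2.1 j h1 (by omega)
                · have : j = (n + 1) * s + (r + 1) := by omega
                  rw [this]; exact hfnew',
              by rintro ⟨h, -⟩; omega⟩]
            rw [zstep, if_neg hfnew, ystep, if_neg hfnew, hzr, if_pos hcond]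
            ring
          · rw [if_neg (by
              rintro ⟨h1, hall, -⟩
              refine hcond ⟨h1, fun j hj1 hj2 => hall j hj1 (by omega), ?_⟩
              rintro ⟨hr0, hfA⟩
              have := hall ((n + 1) * s) le_rfl (by omega)
              rw [hfA] at this; exact Bool.true_eq_false.mp this)]
            rw [zstep, if_neg hfnew, ystep, if_neg hfnew, hzr, if_neg hcond]
    refine ⟨hP, ?_⟩
    have hend : s - 1 < s := by omega
    have hxseq : xs (n + 1) = y ((n + 1) * s + (s - 1)) := by
      rw [hxs (n + 1) hk, show (n + 1 + 1) * s - 1 = (n + 1) * s + (s - 1) by omega]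
    by_cases hfsk : fs (n + 1) = true
    · obtain ⟨j, hjs, hfj⟩ := (hfs (n + 1) hk).1 hfsk
      rw [hP (s - 1) hend, if_neg (by
        rintro ⟨-, hall, -⟩
        have := hall ((n + 1) * s + j) (by omega) (by omega)
        rw [hfj] at this; exact Bool.true_eq_false.mp this)]
      rw [segscan_succ, if_pos hfsk, ← hxseq]
    · have hfsk' : fs (n + 1) = false := by simpa using hfsk
      have hnoflag : ∀ j, j < s → f ((n + 1) * s + j) = false := by
        intro j hj
        by_contra h
        exact hfsk ((hfs (n + 1) hk).2 ⟨j, hj, by simpa using h⟩)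
      have hA : f ((n + 1) * s) = false := by
        have := hnoflag 0 hs; simpa using this
      rw [hP (s - 1) hend, if_pos ⟨by omega, fun j h1 h2 => by
          have := hnoflag (j - (n + 1) * s) (by omega)
          rwa [show (n + 1) * s + (j - (n + 1) * s) = j by omega] at this,
        by rintro ⟨-, h2⟩; rw [hA] at h2; exact Bool.false_ne_true h2⟩]
      rw [segscan_succ, if_neg (by simp [hfsk']), ← hxseq,
        show n + 1 - 1 = n from rfl]
      ring
end

section
/- (Correctness of SSCR's revert step.) Let x be an integer vector and f a boolean vector of length n with f(0)=1 and N segments. Let x̂ and f̂ be the inclusive scans of x and f respectively. Let f⁻ be f shifted left by one with 1 appended (f⁻(i)=1 iff position i is the last position of a segment), and let w = COMPRESS(x̂, f⁻), a vector of length N containing x̂ evaluated at the last position of each segment. Define z(i) = x̂(i) - w(f̂(i) - 2) when f̂(i) ≥ 2, and z(i) = x̂(i) when f̂(i) = 1. Then z is the segmented scan of x over f. -/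
/-- Correctness of SSCR's revert step: with `w` containing the scan values at the last
position of each segment (compress of `x̂` at segment-end positions), subtracting
`w(f̂(i) - 2)` from `x̂(i)` (when `f̂(i) ≥ 2`) yields the segmented scan. -/
theorem stmt_12 (n : ℕ) (x : ℕ → ℤ) (f : ℕ → Bool) (hf0 : f 0 = true)
    (xhat : ℕ → ℤ) (hxhat : ∀ i, xhat i = ∑ j ∈ Finset.range (i + 1), x j)
    (fhat : ℕ → ℕ) (hfhat : ∀ i, fhat i = ∑ j ∈ Finset.range (i + 1), (if f j = true then 1 else 0))
    (w : ℕ → ℤ)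
    (hw : ∀ k i, i + 1 < n → fhat i = k + 1 → f (i + 1) = true → w k = xhat i)
    (hwlast : ∀ k, 0 < n → fhat (n - 1) = k + 1 → w k = xhat (n - 1)) :
    ∀ i, i < n →
      segscan x f i = if 2 ≤ fhat i then xhat i - w (fhat i - 2) else xhat i := by
  intro i
  induction i with
  | zero =>
    intro _
    have h0 : fhat 0 = 1 := by rw [hfhat, Finset.sum_range_one, if_pos hf0]
    simp [segscan, h0, hxhat]
  | succ i ih =>
    intro hin
    have hi : i < n := Nat.lt_of_succ_lt hin
    have hIH := ih hi
    have hfs : fhat (i+1) = fhat i + (if f (i+1) = true then 1 else 0) := by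
      rw [hfhat, hfhat, Finset.sum_range_succ]
    have hxs : xhat (i+1) = xhat i + x (i+1) := by
      rw [hxhat, hxhat, Finset.sum_range_succ]
    have hfpos : 1 ≤ fhat i := by
      rw [hfhat, Finset.sum_range_succ']
      simp [hf0]
    by_cases hf : f (i+1) = true
    · have hk := hw (fhat i - 1) i hin (by omega) hf
      have h2 : fhat (i+1) = fhat i + 1 := by simp [hfs, hf]
      have : 2 ≤ fhat (i+1) := by omega
      simp only [segscan, hf, if_true, this]
      have : fhat (i+1) - 2 = fhat i - 1 := by omega
      rw [this, hk, hxs]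
      ring
    · have h2 : fhat (i+1) = fhat i := by simp [hfs, hf]
      simp only [segscan, hf, if_false, h2, hxs]
      by_cases h3 : 2 ≤ fhat i
      · simp only [h3, if_true] at hIH ⊢
        rw [hIH]; simp; ring
      · simp only [h3, if_false] at hIH ⊢
        rw [hIH]; simp
end

section
/- (Last element of segmented scan gives segment sum.) Let x be an integer vector and f a boolean vector of length n with f(0)=1, segment starts p_0 < p_1 < ... < p_{N-1} and p_N = n. Let z be the segmented scan of x over f. Then for each 0 ≤ k ≤ N-1, z(p_{k+1} - 1) = x(p_k) + x(p_k + 1) + ... + x(p_{k+1} - 1). Hence COMPRESS(z, f⁻) equals the segmented sum of x over f, where f⁻ marks the last position of each segment. -/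
lemma segscan_start (x : ℕ → ℤ) (f : ℕ → Bool) (s : ℕ)
    (h : s = 0 ∨ f s = true) : segscan x f s = x s := by
  cases s with
  | zero => rfl
  | succ i =>
    rcases h with h | h
    · omega
    · simp [segscan, h]

lemma segscan_run (x : ℕ → ℤ) (f : ℕ → Bool) (s : ℕ)
    (hs : s = 0 ∨ f s = true) :
    ∀ t, s ≤ t → (∀ j, s < j → j ≤ t → f j = false) →
      segscan x f t = ∑ j ∈ Finset.Ico s (t + 1), x j := by
  intro t
  induction t with
  | zero =>
    intro hst _
    interval_cases s
    simp [segscan_start x f 0 (Or.inl rfl)]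
  | succ i ih =>
    intro hst hfalse
    rcases Nat.eq_or_lt_of_le hst with heq | hlt
    · subst heq
      simp [segscan_start x f (i+1) hs]
    · have hfi : f (i + 1) = false := hfalse _ (by omega) le_rfl
      have : segscan x f (i + 1) = segscan x f i + x (i + 1) := by
        simp [segscan, hfi]
      rw [this, ih (by omega) (fun j h1 h2 => hfalse j h1 (by omega))]
      exact (Finset.sum_Ico_succ_top (by omega) x).symm

/-- The last element of the segmented scan within each segment equals the segment sum;
hence compressing the segmented scan at segment-end positions gives the segmented sum. -/
theorem stmt_14 (n N : ℕ) (x : ℕ → ℤ) (f : ℕ → Bool) (p : ℕ → ℕ)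
    (hf0 : f 0 = true) (hp0 : p 0 = 0) (hpN : p N = n)
    (hmono : ∀ k, k < N → p k < p (k + 1))
    (hflags : ∀ j, j < n → (f j = true ↔ ∃ k, k < N ∧ p k = j)) :
    ∀ k, k < N →
      segscan x f (p (k + 1) - 1) = ∑ j ∈ Finset.Ico (p k) (p (k + 1)), x j := by
  have pmono : ∀ a b, a < b → b ≤ N → p a < p b := by
    intro a b hab hbN
    induction b with
    | zero => omega
    | succ c ih =>
      rcases Nat.lt_or_ge a c with h | h
      · exact lt_trans (ih h (by omega)) (hmono c (by omega))
      · have : a = c := by omega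
        subst this
        exact hmono a (by omega)
  intro k hk
  have hlt : p k < p (k + 1) := hmono k hk
  have hub : p (k + 1) ≤ n := by
    rcases Nat.eq_or_lt_of_le (Nat.succ_le_of_lt hk) with h | h
    · exact le_of_eq (by rw [← hpN]; exact congrArg p h)
    · rw [← hpN]; exact le_of_lt (pmono _ _ h le_rfl)
  have hstart : p k = 0 ∨ f (p k) = true := by
    rcases Nat.eq_zero_or_pos k with h | h
    · left; rw [h, hp0]
    · right
      exact (hflags (p k) (lt_of_lt_of_le hlt hub)).2 ⟨k, hk, rfl⟩
  have hfalse : ∀ j, p k < j → j ≤ p (k + 1) - 1 → f j = false := by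
    intro j h1 h2
    by_contra h
    have hft : f j = true := by simpa using h
    obtain ⟨m, hm, hpm⟩ := (hflags j (by omega)).1 hft
    rcases Nat.lt_or_ge m (k + 1) with hmk | hmk
    · have hle : p m ≤ p k := by
        rcases Nat.eq_or_lt_of_le (Nat.lt_succ_iff.1 hmk) with h' | h'
        · rw [h']
        · exact le_of_lt (pmono m k h' (le_of_lt hk))
      omega
    · have hge : p (k + 1) ≤ p m := by
        rcases Nat.eq_or_lt_of_le hmk with h' | h'
        · rw [h']
        · exact le_of_lt (pmono (k + 1) m h' (by omega))
      omega
  have := segscan_run x f (p k) hstart (p (k + 1) - 1) (by omega) hfalse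
  rw [this, show p (k + 1) - 1 + 1 = p (k + 1) from by omega]
end

section
/- (Scan of concatenated blocks via block scans and offsets.) Let x be an integer vector of length n = m·s. Let y be the vector of within-block inclusive scans (y restricted to block k is the inclusive scan of x restricted to block k), let t(k) = y((k+1)s - 1) be the block totals, and let T be the inclusive scan of t. Then the full inclusive scan x̂ of x satisfies x̂(i) = y(i) + T(k-1) for i in block k ≥ 1, and x̂(i) = y(i) for i in block 0. -/
/-- Scan of concatenated blocks: the global inclusive scan equals the within-block scan
plus the scanned block totals of the preceding blocks. -/
theorem stmt_15 (m s : ℕ) (hs : 0 < s) (x : ℕ → ℤ)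
    (y : ℕ → ℤ) (hy : ∀ k r, k < m → r < s →
      y (k * s + r) = ∑ j ∈ Finset.range (r + 1), x (k * s + j))
    (t : ℕ → ℤ) (ht : ∀ k, k < m → t k = y ((k + 1) * s - 1))
    (T : ℕ → ℤ) (hT : ∀ k, T k = ∑ j ∈ Finset.range (k + 1), t j) :
    ∀ k r, k < m → r < s →
      (∑ j ∈ Finset.range (k * s + r + 1), x j) =
        if k = 0 then y (k * s + r) else y (k * s + r) + T (k - 1) := by
  have hblock : ∀ k, k < m → t k = ∑ i ∈ Finset.range s, x (k * s + i) := by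
    intro k hk
    have h1 : (k + 1) * s - 1 = k * s + (s - 1) := by
      rw [add_mul, one_mul]
      omega
    have h2 := hy k (s - 1) hk (Nat.sub_lt hs one_pos)
    rw [ht k hk, h1, h2]
    have h3 : s - 1 + 1 = s := by omega
    rw [h3]
  have hpre : ∀ k, k ≤ m → (∑ j ∈ Finset.range (k * s), x j)
      = ∑ j ∈ Finset.range k, t j := by
    intro k
    induction k with
    | zero => simp
    | succ k ih =>
      intro hk
      have hk' : k ≤ m := Nat.le_of_succ_le hk
      have hle : k * s ≤ (k + 1) * s := Nat.mul_le_mul_right s (Nat.le_succ k)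
      rw [← Finset.sum_range_add_sum_Ico x hle, ih hk', Finset.sum_range_succ,
        Finset.sum_Ico_eq_sum_range]
      congr 1
      · have : (k + 1) * s - k * s = s := by rw [add_mul, one_mul]; omega
        rw [this, hblock k hk]
  intro k r hk hr
  have hle : k * s ≤ k * s + r + 1 := by omega
  have hsplit : (∑ j ∈ Finset.range (k * s + r + 1), x j)
      = (∑ j ∈ Finset.range (k * s), x j) + ∑ j ∈ Finset.range (r + 1), x (k * s + j) := by
    rw [← Finset.sum_range_add_sum_Ico x (by omega : k * s ≤ k * s + r + 1),
      Finset.sum_Ico_eq_sum_range]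
    have h4 : k * s + r + 1 - k * s = r + 1 := by omega
    rw [h4]
  rw [hsplit, hpre k (Nat.le_of_lt hk), ← hy k r hk hr]
  rcases Nat.eq_zero_or_pos k with h0 | h0
  · simp [h0]
  · rw [if_neg (by omega), hT (k - 1)]
    have : k - 1 + 1 = k := by omega
    rw [this]
    ring
end
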